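/- The independence number of the circulant graph $Ci_{4N}(1, 2N)$ on $4N$ vertices with connection set $\{1, 2N\}$ is $2N - 1$ for every integer $N \geq 2$. -/

import Mathlib

/-!
An independent set `S` of `Ci_{4N}(1, 2N)` is disjoint from its translate `S + 1`, so
`2 |S| ≤ 4N`. If equality held, `S` and `S + 1` would partition the vertices, forcing
`S + 2 = S`; then `S` is closed under adding `2N`, contradicting the rungs `i ~ i + 2N`.
The bound `2N - 1` is attained by `{1, 3, …, 2N - 3} ∪ {2N, 2N + 2, …, 4N - 2}`.
-/

open Finset

section TranslateDisjoint

variable {G : Type*} [AddGroup G] [DecidableEq G] {S : Finset G} {a : G}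

lemma card_union_image_add_right (ha : ∀ s ∈ S, s + a ∉ S) :
    #(S ∪ S.image (· + a)) = 2 * #S := by
  have hdisj : Disjoint S (S.image (· + a)) := by
    rw [disjoint_right]
    rintro _ ht
    obtain ⟨s, hs, rfl⟩ := mem_image.1 ht
    exact ha s hs
  rw [card_union_of_disjoint hdisj, card_image_of_injective _ (add_left_injective a)]
  ring

lemma two_mul_card_le_of_forall_add_notMem [Fintype G] (ha : ∀ s ∈ S, s + a ∉ S) :
    2 * #S ≤ Fintype.card G :=
  card_union_image_add_right ha ▸ card_le_univ _

lemma add_add_mem_of_forall_add_notMem [Fintype G] (ha : ∀ s ∈ S, s + a ∉ S)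
    (hcard : Fintype.card G ≤ 2 * #S) {s : G} (hs : s ∈ S) : s + a + a ∈ S := by
  have huniv : S ∪ S.image (· + a) = univ :=
    eq_univ_of_card _ ((card_union_image_add_right ha).trans
      (hcard.antisymm' (two_mul_card_le_of_forall_add_notMem ha)))
  rcases mem_union.1 (huniv ▸ mem_univ (s + a + a)) with h | h
  · exact h
  · obtain ⟨u, hu, hua⟩ := mem_image.1 h
    exact absurd (add_right_cancel hua ▸ hu) (ha s hs)

end TranslateDisjoint

lemma add_nsmul_mem_of_forall_add_mem {M : Type*} [AddMonoid M] {S : Finset M} {b : M}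
    (hb : ∀ s ∈ S, s + b ∈ S) {s : M} (hs : s ∈ S) (k : ℕ) : s + k • b ∈ S := by
  induction k with
  | zero => simpa using hs
  | succ k ih => simpa [succ_nsmul, ← add_assoc] using hb _ ih

lemma two_mul_card_lt_of_forall_add_notMem {G : Type*} [AddGroup G] [Fintype G] [DecidableEq G]
    {S : Finset G} {a : G} (ha : ∀ s ∈ S, s + a ∉ S) {k : ℕ}
    (hb : ∀ s ∈ S, s + k • (a + a) ∉ S) : 2 * #S < Fintype.card G := by
  by_contra! hcard
  obtain ⟨s, hs⟩ : S.Nonempty := by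
    rw [← card_pos]
    have := Fintype.card_pos (α := G)
    omega
  have hclosed : ∀ t ∈ S, t + (a + a) ∈ S := fun t ht =>
    add_assoc t a a ▸ add_add_mem_of_forall_add_notMem ha hcard ht
  exact hb s hs (add_nsmul_mem_of_forall_add_mem hclosed hs k)

def mobiusLadderAdj (N : ℕ) (i j : Fin (4 * N)) : Prop :=
  (i.val + 1) % (4 * N) = j.val ∨ (j.val + 1) % (4 * N) = i.val ∨
    (i.val + 2 * N) % (4 * N) = j.val

open Fin.NatCast in
lemma card_lt_of_forall_not_mobiusLadderAdj {N : ℕ} (hN : 0 < N) {S : Finset (Fin (4 * N))}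
    (hS : ∀ i ∈ S, ∀ j ∈ S, ¬ mobiusLadderAdj N i j) : #S < 2 * N := by
  have : NeZero (4 * N) := ⟨by omega⟩
  have hstep : ∀ s ∈ S, s + 1 ∉ S := fun s hs ht =>
    hS s hs _ ht (Or.inl (by simp [Fin.val_add]))
  have hrung : ∀ s ∈ S, s + N • (1 + 1) ∉ S := fun s hs ht =>
    hS s hs _ ht (Or.inr (Or.inr (by
      rw [← two_nsmul, smul_smul, nsmul_one, Fin.val_add, Fin.val_natCast]
      simp [mul_comm])))
  have := two_mul_card_lt_of_forall_add_notMem hstep hrung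
  rw [Fintype.card_fin] at this
  omega

def maxIndepVertex (N k : ℕ) : ℕ := if k < N - 1 then 2 * k + 1 else 2 * k + 2

lemma maxIndepVertex_strictMono (N : ℕ) : StrictMono (maxIndepVertex N) :=
  strictMono_nat_of_lt_succ fun k => by unfold maxIndepVertex; split_ifs <;> omega

lemma maxIndepVertex_lt {N k : ℕ} (hk : k < 2 * N - 1) : maxIndepVertex N k < 4 * N - 1 := by
  unfold maxIndepVertex; split_ifs <;> omega

lemma maxIndepVertex_not_adj {N k : ℕ} (hN : 2 ≤ N) (hk : k < 2 * N - 1) (l : ℕ) :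
    (maxIndepVertex N k + 1) % (4 * N) ≠ maxIndepVertex N l ∧
      (maxIndepVertex N k + 2 * N) % (4 * N) ≠ maxIndepVertex N l := by
  have hk' := maxIndepVertex_lt hk
  rw [Nat.mod_eq_of_lt (by omega), Nat.add_mod_eq_ite, Nat.mod_eq_of_lt (by omega),
    Nat.mod_eq_of_lt (by omega)]
  unfold maxIndepVertex
  split_ifs <;> omega

def maxIndepSet (N : ℕ) : Finset (Fin (4 * N)) :=
  univ.map ⟨fun k : Fin (2 * N - 1) => ⟨maxIndepVertex N k, by
    have := maxIndepVertex_lt k.isLt; omega⟩,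
    fun k l hkl => Fin.ext ((maxIndepVertex_strictMono N).injective (Fin.mk.inj hkl))⟩

lemma card_maxIndepSet (N : ℕ) : #(maxIndepSet N) = 2 * N - 1 := by
  simp [maxIndepSet]

lemma maxIndepSet_forall_not_mobiusLadderAdj {N : ℕ} (hN : 2 ≤ N) :
    ∀ i ∈ maxIndepSet N, ∀ j ∈ maxIndepSet N, ¬ mobiusLadderAdj N i j := by
  simp only [maxIndepSet, mem_map, mem_univ, true_and, forall_exists_index]
  rintro _ k rfl _ l rfl (h | h | h)
  · exact (maxIndepVertex_not_adj hN k.isLt l).1 h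
  · exact (maxIndepVertex_not_adj hN l.isLt k).1 h
  · exact (maxIndepVertex_not_adj hN k.isLt l).2 h

theorem indepNum_mobius_ladder (N : ℕ) (hN : 2 ≤ N) :
    let Adj : Fin (4 * N) → Fin (4 * N) → Prop := fun i j =>
      (i.val + 1) % (4 * N) = j.val ∨ (j.val + 1) % (4 * N) = i.val ∨
        (i.val + 2 * N) % (4 * N) = j.val
    IsGreatest
      {m : ℕ | ∃ S : Finset (Fin (4 * N)),
        (∀ i ∈ S, ∀ j ∈ S, ¬ Adj i j) ∧ S.card = m}
      (2 * N - 1) := by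
  refine ⟨⟨maxIndepSet N, maxIndepSet_forall_not_mobiusLadderAdj hN, card_maxIndepSet N⟩, ?_⟩
  rintro _ ⟨S, hS, rfl⟩
  have := card_lt_of_forall_not_mobiusLadderAdj (by omega) hS
  omega
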